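/- arXiv:1510.01781 — 3 statements merged into one kernel-verified Lean document; each statement's English description precedes it below -/
import Mathlib

section
/- Let α ∈ (0,2), ρ ∈ (0,1), ρ̂ = 1 − ρ, with αρ ∈ (0,1) and αρ̂ ∈ (0,1), and suppose α ≠ 1 so that α − 1 ∈ (−1, α) \ {0}. Define the 2×2 matrix F(z) with entries F₁₁(z) = −Γ(α−z)Γ(1+z)/(Γ(αρ̂−z)Γ(1−αρ̂+z)), F₁₂(z) = Γ(α−z)Γ(1+z)/(Γ(αρ̂)Γ(1−αρ̂)), F₂₁(z) = Γ(α−z)Γ(1+z)/(Γ(αρ)Γ(1−αρ)), F₂₂(z) = −Γ(α−z)Γ(1+z)/(Γ(αρ−z)Γ(1−αρ+z)). Then F(α−1) · (sin(παρ̂), sin(παρ))ᵀ = 0, i.e. the vector (sin(παρ̂), sin(παρ)) is a right eigenvector of F(α−1) with eigenvalue 0. -/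
/-!
At `z = α - 1` the common numerator `Γ(α - z) Γ(1 + z)` is `Γ(α)`, and since `αρ + αρ̂ = α` each
denominator becomes a product `Γ(s) Γ(1 - s)` with `s ∈ {αρ, αρ̂}`. By the reflection formula
`F(α - 1) = (Γ(α) / π) · [[-sin παρ, sin παρ̂], [sin παρ, -sin παρ̂]]`, whose rows are both
orthogonal to `(sin παρ̂, sin παρ)`.
-/

open Real Matrix

/-- The paper's `F(z)`, with `a = αρ` and `b = αρ̂`. -/
noncomputable def stableMAPExponent (α a b z : ℝ) : Matrix (Fin 2) (Fin 2) ℝ :=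
  !![ -(Gamma (α - z) * Gamma (1 + z)) / (Gamma (b - z) * Gamma (1 - b + z)),
      (Gamma (α - z) * Gamma (1 + z)) / (Gamma b * Gamma (1 - b));
      (Gamma (α - z) * Gamma (1 + z)) / (Gamma a * Gamma (1 - a)),
      -(Gamma (α - z) * Gamma (1 + z)) / (Gamma (a - z) * Gamma (1 - a + z)) ]

theorem div_Gamma_mul_Gamma_one_sub (c s : ℝ) :
    c / (Gamma s * Gamma (1 - s)) = c / π * sin (π * s) := by
  rw [Gamma_mul_Gamma_one_sub, div_div_eq_mul_div, mul_div_right_comm]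

theorem stableMAPExponent_sub_one {α a b : ℝ} (h : a + b = α) :
    stableMAPExponent α a b (α - 1) =
      (Gamma α / π) • !![-sin (π * a), sin (π * b); sin (π * a), -sin (π * b)] := by
  subst h
  have hb : b - (a + b - 1) = 1 - a := by ring
  have ha : a - (a + b - 1) = 1 - b := by ring
  have hb' : 1 - b + (a + b - 1) = a := by ring
  have ha' : 1 - a + (a + b - 1) = b := by ring
  ext i j
  fin_cases i <;> fin_cases j <;>
    simp [stableMAPExponent, hb, ha, hb', ha', neg_div, div_Gamma_mul_Gamma_one_sub,
      mul_comm (Gamma (1 - a)), mul_comm (Gamma (1 - b))]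

theorem mulVec_swap_eq_zero (x y : ℝ) :
    !![-x, y; x, -y] *ᵥ ![y, x] = 0 := by
  ext i
  fin_cases i <;> simp [mulVec, dotProduct, Fin.sum_univ_two] <;> ring

theorem stmt_1_general (α ρ ρh : ℝ) (hρh : ρh = 1 - ρ)
    (F : ℝ → Matrix (Fin 2) (Fin 2) ℝ)
    (hF : ∀ z, F z =
      !![ -(Real.Gamma (α - z) * Real.Gamma (1 + z)) /
            (Real.Gamma (α * ρh - z) * Real.Gamma (1 - α * ρh + z)),
          (Real.Gamma (α - z) * Real.Gamma (1 + z)) /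
            (Real.Gamma (α * ρh) * Real.Gamma (1 - α * ρh));
          (Real.Gamma (α - z) * Real.Gamma (1 + z)) /
            (Real.Gamma (α * ρ) * Real.Gamma (1 - α * ρ)),
          -(Real.Gamma (α - z) * Real.Gamma (1 + z)) /
            (Real.Gamma (α * ρ - z) * Real.Gamma (1 - α * ρ + z)) ]) :
    (F (α - 1)).mulVec ![Real.sin (π * (α * ρh)), Real.sin (π * (α * ρ))] = 0 := by
  have hsum : α * ρ + α * ρh = α := by rw [hρh]; ring
  have hFexp : F (α - 1) = stableMAPExponent α (α * ρ) (α * ρh) (α - 1) := hF (α - 1)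
  rw [hFexp, stableMAPExponent_sub_one hsum, smul_mulVec, mulVec_swap_eq_zero, smul_zero]

theorem stmt_1 (α ρ ρh : ℝ) (hα : α ∈ Set.Ioo (0:ℝ) 2) (hρ : ρ ∈ Set.Ioo (0:ℝ) 1)
    (hρh : ρh = 1 - ρ) (hαρ : α * ρ ∈ Set.Ioo (0:ℝ) 1) (hαρh : α * ρh ∈ Set.Ioo (0:ℝ) 1)
    (hα1 : α ≠ 1)
    (F : ℝ → Matrix (Fin 2) (Fin 2) ℝ)
    (hF : ∀ z, F z =
      !![ -(Real.Gamma (α - z) * Real.Gamma (1 + z)) /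
            (Real.Gamma (α * ρh - z) * Real.Gamma (1 - α * ρh + z)),
          (Real.Gamma (α - z) * Real.Gamma (1 + z)) /
            (Real.Gamma (α * ρh) * Real.Gamma (1 - α * ρh));
          (Real.Gamma (α - z) * Real.Gamma (1 + z)) /
            (Real.Gamma (α * ρ) * Real.Gamma (1 - α * ρ)),
          -(Real.Gamma (α - z) * Real.Gamma (1 + z)) /
            (Real.Gamma (α * ρ - z) * Real.Gamma (1 - α * ρ + z)) ]) :
    (F (α - 1)).mulVec ![Real.sin (π * (α * ρh)), Real.sin (π * (α * ρ))] = 0 :=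
  stmt_1_general α ρ ρh hρh F hF
end

section
/- Let p, q, r : (0,∞) → [0,1] satisfy: (i) p(x+ε) ≥ p(x)·q(ε) for all x, ε > 0; (ii) p(x+ε) ≤ q(ε)·p(x) + r(ε) for all x, ε > 0; (iii) lim_{ε→0+} q(ε) = 1 and lim_{ε→0+} r(ε) = 0. Then p is right-continuous on (0,∞): for every x > 0, lim_{ε→0+} p(x+ε) = p(x). -/
open Filter Topology

theorem stmt_13 (p q r : ℝ → ℝ)
    (hp : ∀ x > 0, p x ∈ Set.Icc (0:ℝ) 1)
    (hq : ∀ x > 0, q x ∈ Set.Icc (0:ℝ) 1)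
    (hr : ∀ x > 0, r x ∈ Set.Icc (0:ℝ) 1)
    (h1 : ∀ x > 0, ∀ ε > 0, p (x + ε) ≥ p x * q ε)
    (h2 : ∀ x > 0, ∀ ε > 0, p (x + ε) ≤ q ε * p x + r ε)
    (hq1 : Tendsto q (𝓝[>] 0) (𝓝 1))
    (hr0 : Tendsto r (𝓝[>] 0) (𝓝 0)) :
    ∀ x > 0, Tendsto (fun ε => p (x + ε)) (𝓝[>] 0) (𝓝 (p x)) := by
  intro x hx
  have hlow : Tendsto (fun ε => p x * q ε) (𝓝[>] 0) (𝓝 (p x)) := by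
    simpa using tendsto_const_nhds.mul hq1
  have hup : Tendsto (fun ε => q ε * p x + r ε) (𝓝[>] 0) (𝓝 (p x)) := by
    simpa using (hq1.mul tendsto_const_nhds).add hr0
  refine tendsto_of_tendsto_of_tendsto_of_le_of_le' hlow hup ?_ ?_
  · filter_upwards [self_mem_nhdsWithin] with ε hε using h1 x hx ε hε
  · filter_upwards [self_mem_nhdsWithin] with ε hε using h2 x hx ε hε
end

section
/- Let α ∈ (0,2), ρ ∈ (0,1), ρ̂ = 1−ρ, with αρ, αρ̂ ∈ (0,1) and α ≠ 1. Define the 2×2 matrix F°(z) with entries F°₁₁(z) = −Γ(1−z)Γ(α+z)/(Γ(1−αρ−z)Γ(αρ+z)), F°₁₂(z) = Γ(1−z)Γ(α+z)/(Γ(αρ)Γ(1−αρ)), F°₂₁(z) = Γ(1−z)Γ(α+z)/(Γ(αρ̂)Γ(1−αρ̂)), F°₂₂(z) = −Γ(1−z)Γ(α+z)/(Γ(1−αρ̂−z)Γ(αρ̂+z)). Then det F°(z) = (Γ(1−z)²Γ(α+z)²/π²)·{sin(π(αρ+z))sin(π(αρ̂+z)) − sin(παρ)sin(παρ̂)}, and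 det F°(1−α) = 0. -/
open Real Matrix

lemma gamma_inv_aux (x : ℝ) :
    (Real.Gamma (1 - x) * Real.Gamma x)⁻¹ = Real.sin (π * x) / π := by
  have h := Real.Gamma_mul_Gamma_one_sub x
  rcases eq_or_ne (Real.sin (π * x)) 0 with hs | hs
  · rw [hs] at h ⊢
    simp only [div_zero] at h
    rw [mul_comm, h]
    simp
  · rw [mul_comm, h, inv_div]

theorem stmt_15 (α ρ ρh : ℝ) (hα : α ∈ Set.Ioo (0:ℝ) 2) (hρ : ρ ∈ Set.Ioo (0:ℝ) 1)
    (hρh : ρh = 1 - ρ) (hαρ : α * ρ ∈ Set.Ioo (0:ℝ) 1) (hαρh : α * ρh ∈ Set.Ioo (0:ℝ) 1)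
    (hα1 : α ≠ 1)
    (Fc : ℝ → Matrix (Fin 2) (Fin 2) ℝ)
    (hFc : ∀ z, Fc z =
      !![ -(Real.Gamma (1 - z) * Real.Gamma (α + z)) /
            (Real.Gamma (1 - α * ρ - z) * Real.Gamma (α * ρ + z)),
          (Real.Gamma (1 - z) * Real.Gamma (α + z)) /
            (Real.Gamma (α * ρ) * Real.Gamma (1 - α * ρ));
          (Real.Gamma (1 - z) * Real.Gamma (α + z)) /
            (Real.Gamma (α * ρh) * Real.Gamma (1 - α * ρh)),
          -(Real.Gamma (1 - z) * Real.Gamma (α + z)) /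
            (Real.Gamma (1 - α * ρh - z) * Real.Gamma (α * ρh + z)) ]) :
    (∀ z : ℝ, (Fc z).det =
      (Real.Gamma (1 - z) ^ 2 * Real.Gamma (α + z) ^ 2 / π ^ 2) *
        (Real.sin (π * (α * ρ + z)) * Real.sin (π * (α * ρh + z))
          - Real.sin (π * (α * ρ)) * Real.sin (π * (α * ρh)))) ∧
    (Fc (1 - α)).det = 0 := by
  have main : ∀ z : ℝ, (Fc z).det =
      (Real.Gamma (1 - z) ^ 2 * Real.Gamma (α + z) ^ 2 / π ^ 2) *
        (Real.sin (π * (α * ρ + z)) * Real.sin (π * (α * ρh + z))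
          - Real.sin (π * (α * ρ)) * Real.sin (π * (α * ρh))) := by
    intro z
    rw [hFc z, Matrix.det_fin_two_of]
    rw [show (1:ℝ) - α * ρ - z = 1 - (α * ρ + z) by ring,
        show (1:ℝ) - α * ρh - z = 1 - (α * ρh + z) by ring,
        show Real.Gamma (α * ρ) * Real.Gamma (1 - α * ρ)
          = Real.Gamma (1 - α * ρ) * Real.Gamma (α * ρ) from mul_comm _ _,
        show Real.Gamma (α * ρh) * Real.Gamma (1 - α * ρh)
          = Real.Gamma (1 - α * ρh) * Real.Gamma (α * ρh) from mul_comm _ _]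
    rw [div_eq_mul_inv, div_eq_mul_inv, div_eq_mul_inv, div_eq_mul_inv,
        gamma_inv_aux (α * ρ + z), gamma_inv_aux (α * ρh + z),
        gamma_inv_aux (α * ρ), gamma_inv_aux (α * ρh)]
    ring
  refine ⟨main, ?_⟩
  rw [main (1 - α)]
  rw [show α * ρ + (1 - α) = 1 - α * ρh by rw [hρh]; ring,
      show α * ρh + (1 - α) = 1 - α * ρ by rw [hρh]; ring,
      show π * (1 - α * ρh) = π - π * (α * ρh) by ring,
      show π * (1 - α * ρ) = π - π * (α * ρ) by ring,
      Real.sin_pi_sub, Real.sin_pi_sub]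
  ring
end
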